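/- For every n ≥ 1, A_n + g_J(n)·I_n = ∑_{i=1}^{n-1} J₂(i)·E_i, where g_J(n) = ∑_{k=1}^{n-1} J₂(k) and J₂ is the Jordan totient function; consequently A_n + g_J(n)·I_n admits an integer completely positive factorization. The key identity used is ∑_{d | k} J₂(d) = k² for every positive integer k. -/

import Mathlib

/-!
Compare entries. As `|b - a| ≤ n - 1`, the `(a, b)` entry of `E_i` is `1` exactly when
`a ≡ b [MOD i]`, so off the diagonal `∑ J₂(i) E_i` has entry `∑_{i ∣ |b - a|} J₂(i) = (b - a)²`,
and on the diagonal `∑_{i < n} J₂(i) = g_J(n)`. Both sides of the divisor-sum identity are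
multiplicative, and on prime powers it telescopes. Möbius inversion shows that `J₂` is integer
valued, and it is nonnegative; since `E_i = R_i R_iᵀ` for the `0/1` matrix `R_i` of residues
mod `i`, putting `J₂(i)` copies of each `R_i` side by side factors the matrix over `ℕ`.
-/

open Finset
open scoped ArithmeticFunction.zeta ArithmeticFunction.Moebius

namespace ArithmeticFunction

noncomputable def jordanTotient (k : ℕ) : ArithmeticFunction ℝ :=
  pmul (pow k : ArithmeticFunction ℝ) (prodPrimeFactors fun p => 1 - 1 / (p : ℝ) ^ k)

theorem jordanTotient_apply_of_ne_zero (k : ℕ) {n : ℕ} (hn : n ≠ 0) :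
    jordanTotient k n = (n : ℝ) ^ k * ∏ p ∈ n.primeFactors, (1 - 1 / (p : ℝ) ^ k) := by
  simp [jordanTotient, pmul_apply, prodPrimeFactors_apply hn, pow_apply, hn]

theorem jordanTotient_apply {k : ℕ} (hk : k ≠ 0) (n : ℕ) :
    jordanTotient k n = (n : ℝ) ^ k * ∏ p ∈ n.primeFactors, (1 - 1 / (p : ℝ) ^ k) := by
  rcases eq_or_ne n 0 with rfl | hn
  · simp [hk]
  · exact jordanTotient_apply_of_ne_zero k hn

theorem isMultiplicative_jordanTotient (k : ℕ) : (jordanTotient k).IsMultiplicative :=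
  isMultiplicative_pow.natCast.pmul (IsMultiplicative.prodPrimeFactors _)

theorem jordanTotient_prime_pow_succ (k : ℕ) {p : ℕ} (hp : p.Prime) (e : ℕ) :
    jordanTotient k (p ^ (e + 1)) = ((p : ℝ) ^ k) ^ (e + 1) - ((p : ℝ) ^ k) ^ e := by
  have hp0 : (p : ℝ) ^ k ≠ 0 := pow_ne_zero _ (Nat.cast_ne_zero.mpr hp.ne_zero)
  rw [jordanTotient_apply_of_ne_zero k (pow_ne_zero _ hp.ne_zero),
    Nat.primeFactors_prime_pow e.succ_ne_zero hp, prod_singleton]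
  push_cast
  field_simp
  ring

theorem sum_range_jordanTotient_prime_pow (k : ℕ) {p : ℕ} (hp : p.Prime) (e : ℕ) :
    ∑ i ∈ range (e + 1), jordanTotient k (p ^ i) = ((p : ℝ) ^ k) ^ e := by
  induction e with
  | zero => simp [(isMultiplicative_jordanTotient k).map_one]
  | succ e ih => rw [sum_range_succ, ih, jordanTotient_prime_pow_succ k hp, add_sub_cancel]

theorem jordanTotient_mul_zeta (k : ℕ) :
    jordanTotient k * ζ = (pow k : ArithmeticFunction ℝ) := by
  refine (IsMultiplicative.eq_iff_eq_on_prime_powers _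
    ((isMultiplicative_jordanTotient k).mul isMultiplicative_zeta.natCast) _
    isMultiplicative_pow.natCast).mpr fun p e hp => ?_
  rw [coe_mul_zeta_apply, Nat.sum_divisors_prime_pow hp, sum_range_jordanTotient_prime_pow k hp]
  simp [natCoe_apply, pow_apply, hp.ne_zero, ← pow_mul, mul_comm]

theorem sum_divisors_jordanTotient (k : ℕ) {n : ℕ} (hn : n ≠ 0) :
    ∑ d ∈ n.divisors, jordanTotient k d = (n : ℝ) ^ k := by
  rw [← coe_mul_zeta_apply, jordanTotient_mul_zeta]
  simp [natCoe_apply, pow_apply, hn]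

theorem jordanTotient_eq_intCoe (k : ℕ) :
    jordanTotient k = ↑(μ * (pow k : ArithmeticFunction ℤ)) := by
  calc jordanTotient k = jordanTotient k * ζ * μ := by
        rw [mul_assoc, coe_zeta_mul_coe_moebius, mul_one]
    _ = _ := by rw [jordanTotient_mul_zeta, mul_comm, intCoe_mul]; simp

theorem jordanTotient_nonneg (k n : ℕ) : 0 ≤ jordanTotient k n := by
  rcases eq_or_ne n 0 with rfl | hn
  · simp
  rw [jordanTotient_apply_of_ne_zero k hn]
  refine mul_nonneg (by positivity) (prod_nonneg fun p hp => sub_nonneg.mpr ?_)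
  have : (1 : ℝ) ≤ (p : ℝ) ^ k :=
    one_le_pow₀ (by exact_mod_cast (Nat.prime_of_mem_primeFactors hp).one_le)
  exact div_le_one_of_le₀ this (by positivity)

theorem exists_natCast_eq_jordanTotient (k n : ℕ) :
    ∃ c : ℕ, (c : ℝ) = jordanTotient k n := by
  have h := jordanTotient_nonneg k n
  rw [jordanTotient_eq_intCoe, intCoe_apply] at h ⊢
  lift (μ * (pow k : ArithmeticFunction ℤ)) n to ℕ using (by exact_mod_cast h) with c
  exact ⟨c, by simp⟩

end ArithmeticFunction

theorem Nat.filter_modEq_Icc_eq_divisors {a b m : ℕ} (hab : a < b) (hbm : b - a ≤ m) :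
    {i ∈ Icc 1 m | a ≡ b [MOD i]} = (b - a).divisors := by
  ext i
  simp only [mem_filter, mem_Icc, Nat.mem_divisors, Nat.modEq_iff_dvd' hab.le]
  constructor
  · rintro ⟨-, hi⟩
    exact ⟨hi, by omega⟩
  · rintro ⟨hi, hba⟩
    exact ⟨⟨Nat.pos_of_dvd_of_pos hi (by omega), (Nat.le_of_dvd (by omega) hi).trans hbm⟩,
      hi⟩

theorem ArithmeticFunction.sum_filter_modEq_jordanTotient (k : ℕ) {a b m : ℕ} (ha : a ≤ m)
    (hb : b ≤ m) (hab : a ≠ b) :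
    ∑ i ∈ Icc 1 m with a ≡ b [MOD i], jordanTotient k i = |(b : ℝ) - a| ^ k := by
  wlog h : a < b generalizing a b
  · simp_rw [Nat.ModEq.comm (a := a), abs_sub_comm (b : ℝ)]
    exact this hb ha hab.symm (by omega)
  rw [Nat.filter_modEq_Icc_eq_divisors h (by omega), sum_divisors_jordanTotient k (by omega),
    Nat.cast_sub h.le, abs_of_nonneg (sub_nonneg.mpr (by exact_mod_cast h.le))]

theorem sum_Icc_ite_add_mul_eq {R : Type*} [AddCommMonoidWithOne R] {a b i m : ℕ} (hi : 0 < i)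
    (hb : b ≤ m) :
    ∑ k ∈ Icc 1 m, (if a + k * i = b then (1 : R) else 0) =
      if a < b ∧ i ∣ b - a then 1 else 0 := by
  split_ifs with h
  · obtain ⟨hab, c, hc⟩ := h
    have hc0 : 0 < c := Nat.pos_of_ne_zero (by rintro rfl; omega)
    have hcm : c ≤ m := (Nat.le_mul_of_pos_left c hi).trans (by omega)
    rw [sum_eq_single_of_mem c (mem_Icc.mpr ⟨hc0, hcm⟩)]
    · rw [if_pos (by rw [mul_comm]; omega)]
    · intro k _ hkc
      rw [if_neg]
      intro hk
      exact hkc (Nat.eq_of_mul_eq_mul_left hi (by rw [mul_comm]; omega))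
  · refine sum_eq_zero fun k hk => if_neg fun hk' => h ⟨?_, k, ?_⟩
    · have : 0 < k * i := Nat.mul_pos (mem_Icc.mp hk).1 hi
      omega
    · rw [mul_comm]; omega

namespace Matrix

variable (R : Type*)

def nilpotentJordanBlock [Zero R] [One R] (n : ℕ) : Matrix (Fin n) (Fin n) R :=
  of fun i j => if (i : ℕ) + 1 = j then 1 else 0

def modEqMatrix [Zero R] [One R] (n i : ℕ) : Matrix (Fin n) (Fin n) R :=
  of fun a b => if (a : ℕ) ≡ b [MOD i] then 1 else 0

def residueMatrix [Zero R] [One R] (n i : ℕ) : Matrix (Fin n) (Fin i) R :=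
  of fun a r => if (a : ℕ) % i = r then 1 else 0

variable {R}

@[simp]
theorem nilpotentJordanBlock_apply [Zero R] [One R] {n : ℕ} (i j : Fin n) :
    nilpotentJordanBlock R n i j = if (i : ℕ) + 1 = j then 1 else 0 :=
  rfl

@[simp]
theorem modEqMatrix_apply [Zero R] [One R] {n i : ℕ} (a b : Fin n) :
    modEqMatrix R n i a b = if (a : ℕ) ≡ b [MOD i] then 1 else 0 :=
  rfl

@[simp]
theorem residueMatrix_apply [Zero R] [One R] {n i : ℕ} (a : Fin n) (r : Fin i) :
    residueMatrix R n i a r = if (a : ℕ) % i = r then 1 else 0 :=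
  rfl

theorem nilpotentJordanBlock_pow_apply [Semiring R] {n : ℕ} (m : ℕ) (i j : Fin n) :
    (nilpotentJordanBlock R n ^ m) i j = if (i : ℕ) + m = j then 1 else 0 := by
  induction m generalizing j with
  | zero => simp [one_apply, Fin.ext_iff]
  | succ m ih =>
    rw [pow_succ, mul_apply]
    simp only [ih, nilpotentJordanBlock_apply, ite_mul, one_mul, zero_mul]
    rcases lt_or_ge ((i : ℕ) + m) n with h | h
    · rw [Fintype.sum_eq_single ⟨i + m, h⟩ fun l hl => if_neg fun h' => hl (Fin.ext h'.symm)]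
      simp only [if_true, add_assoc]
    · rw [if_neg (by omega)]
      exact sum_eq_zero fun l _ => if_neg (by omega)

theorem one_add_sum_pow_add_transpose_pow [CommSemiring R] {n i : ℕ} (hi : 0 < i) :
    1 + ∑ k ∈ Icc 1 (n - 1), (nilpotentJordanBlock R n ^ (k * i) +
      (nilpotentJordanBlock R n)ᵀ ^ (k * i)) = modEqMatrix R n i := by
  ext a b
  simp only [add_apply, sum_apply, one_apply, ← transpose_pow, transpose_apply,
    nilpotentJordanBlock_pow_apply, sum_add_distrib, modEqMatrix_apply]
  rw [sum_Icc_ite_add_mul_eq hi (by omega), sum_Icc_ite_add_mul_eq hi (by omega)]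
  rcases lt_trichotomy (a : ℕ) b with hab | hab | hab
  · simp [hab, hab.ne, hab.not_gt, Fin.ext_iff, Nat.modEq_iff_dvd' hab.le]
  · simp [Fin.ext hab, Nat.ModEq.refl]
  · simp [hab, hab.ne', hab.not_gt, Fin.ext_iff, Nat.ModEq.comm (a := (a : ℕ)),
      Nat.modEq_iff_dvd' hab.le]

theorem residueMatrix_mul_transpose [NonAssocSemiring R] {n i : ℕ} (hi : 0 < i) :
    residueMatrix R n i * (residueMatrix R n i)ᵀ = modEqMatrix R n i := by
  ext a b
  simp only [mul_apply, transpose_apply, residueMatrix_apply, modEqMatrix_apply, ite_mul, one_mul,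
    zero_mul]
  rw [Fintype.sum_eq_single ⟨a % i, Nat.mod_lt _ hi⟩ fun r hr =>
    if_neg fun h => hr (Fin.ext h.symm), if_pos rfl]
  exact if_congr eq_comm rfl rfl

theorem map_modEqMatrix [NonAssocSemiring R] (n i : ℕ) :
    (modEqMatrix ℕ n i).map (Nat.cast : ℕ → R) = modEqMatrix R n i := by
  ext a b
  simp

theorem exists_mul_transpose_eq_sum_nsmul [Semiring R] {m ι : Type*} [Fintype m]
    {κ : ι → Type*} [∀ i, Fintype (κ i)] (s : Finset ι) (c : ι → ℕ) (V : ∀ i, Matrix m (κ i) R) :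
    ∃ (K : ℕ) (U : Matrix m (Fin K) R), U * Uᵀ = ∑ i ∈ s, c i • (V i * (V i)ᵀ) := by
  let U : Matrix m ((i : s) × Fin (c i) × κ i) R := of fun a x => V x.1 a x.2.2
  refine ⟨_, U.submatrix id (Fintype.equivFin _).symm, ?_⟩
  rw [transpose_submatrix, submatrix_mul_equiv, submatrix_id_id]
  ext a b
  simp only [U, mul_apply, of_apply, transpose_apply, Fintype.sum_sigma, univ_eq_attach,
    Fintype.sum_prod_type, sum_const, card_univ, Fintype.card_fin, nsmul_eq_mul, sum_apply,
    smul_apply]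
  exact sum_attach s fun i => (c i : R) * ∑ j, V i a j * V i b j

theorem of_sq_sub_add_smul_one_eq_sum_jordanTotient_smul_modEqMatrix (n : ℕ) :
    of (fun a b : Fin n => ((b.val : ℝ) - (a.val : ℝ)) ^ 2) +
        (∑ i ∈ Icc 1 (n - 1), ArithmeticFunction.jordanTotient 2 i) • 1 =
      ∑ i ∈ Icc 1 (n - 1), ArithmeticFunction.jordanTotient 2 i • modEqMatrix ℝ n i := by
  ext a b
  simp only [add_apply, of_apply, smul_apply, one_apply, sum_apply, modEqMatrix_apply, smul_eq_mul,
    mul_ite, mul_one, mul_zero, ← sum_filter]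
  by_cases hab : a = b
  · simp [hab, Nat.ModEq.refl]
  · rw [if_neg hab, add_zero, ArithmeticFunction.sum_filter_modEq_jordanTotient 2 (by omega)
      (by omega) (Fin.val_ne_of_ne hab), sq_abs]

end Matrix

open Matrix

theorem stmt_19_general (n : ℕ)
    (A : Matrix (Fin n) (Fin n) ℝ)
    (hA : ∀ i j : Fin n, A i j = ((j.val : ℝ) - (i.val : ℝ)) ^ 2)
    (J : Matrix (Fin n) (Fin n) ℝ)
    (hJ : ∀ i j : Fin n, J i j = if i.val + 1 = j.val then 1 else 0)
    (J2 : ℕ → ℝ)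
    (hJ2 : ∀ k : ℕ, J2 k = (k : ℝ) ^ 2 * ∏ p ∈ k.primeFactors, (1 - 1 / (p : ℝ) ^ 2))
    (E : ℕ → Matrix (Fin n) (Fin n) ℝ)
    (hE : ∀ i : ℕ, E i = 1 + ∑ k ∈ Finset.Icc 1 (n - 1), (J ^ (k * i) + (Jᵀ) ^ (k * i)))
    (gJ : ℝ) (hgJ : gJ = ∑ k ∈ Finset.Icc 1 (n - 1), J2 k) :
    (∀ k : ℕ, 1 ≤ k → ∑ d ∈ k.divisors, J2 d = (k : ℝ) ^ 2) ∧
    (A + gJ • (1 : Matrix (Fin n) (Fin n) ℝ) = ∑ i ∈ Finset.Icc 1 (n - 1), J2 i • E i) ∧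
    (∃ (m : ℕ) (U : Matrix (Fin n) (Fin m) ℕ),
      A + gJ • (1 : Matrix (Fin n) (Fin n) ℝ)
        = (U.map (fun x : ℕ => (x : ℝ))) * (U.map (fun x : ℕ => (x : ℝ)))ᵀ) := by
  obtain rfl : J2 = ArithmeticFunction.jordanTotient 2 :=
    funext fun k => (hJ2 k).trans (ArithmeticFunction.jordanTotient_apply two_ne_zero k).symm
  obtain rfl : A = of fun a b : Fin n => ((b.val : ℝ) - (a.val : ℝ)) ^ 2 :=
    Matrix.ext fun i j => by rw [hA, of_apply]
  obtain rfl : J = nilpotentJordanBlock ℝ n := Matrix.ext hJ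
  subst hgJ
  have hE : ∀ i ∈ Icc 1 (n - 1), E i = modEqMatrix ℝ n i := fun i hi =>
    (hE i).trans (one_add_sum_pow_add_transpose_pow (mem_Icc.mp hi).1)
  rw [sum_congr rfl fun i hi => congrArg _ (hE i hi),
    of_sq_sub_add_smul_one_eq_sum_jordanTotient_smul_modEqMatrix]
  refine ⟨fun k hk => ArithmeticFunction.sum_divisors_jordanTotient 2 (by omega), rfl, ?_⟩
  choose c hc using ArithmeticFunction.exists_natCast_eq_jordanTotient 2
  obtain ⟨K, U, hU⟩ := exists_mul_transpose_eq_sum_nsmul (Icc 1 (n - 1)) c (residueMatrix ℕ n)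
  refine ⟨K, U, ?_⟩
  calc ∑ i ∈ Icc 1 (n - 1), ArithmeticFunction.jordanTotient 2 i • modEqMatrix ℝ n i
      = (Nat.castRingHom ℝ).mapMatrix (U * Uᵀ) := by
        rw [hU, map_sum]
        refine sum_congr rfl fun i hi => ?_
        rw [residueMatrix_mul_transpose (mem_Icc.mp hi).1, map_nsmul, RingHom.mapMatrix_apply,
          Nat.coe_castRingHom, map_modEqMatrix, ← hc, Nat.cast_smul_eq_nsmul]
    _ = _ := by rw [RingHom.mapMatrix_apply, Matrix.map_mul, transpose_map]; rfl

theorem stmt_19 (n : ℕ) (hn : 1 ≤ n)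
    (A : Matrix (Fin n) (Fin n) ℝ)
    (hA : ∀ i j : Fin n, A i j = ((j.val : ℝ) - (i.val : ℝ)) ^ 2)
    (J : Matrix (Fin n) (Fin n) ℝ)
    (hJ : ∀ i j : Fin n, J i j = if i.val + 1 = j.val then 1 else 0)
    (J2 : ℕ → ℝ)
    (hJ2 : ∀ k : ℕ, J2 k = (k : ℝ) ^ 2 * ∏ p ∈ k.primeFactors, (1 - 1 / (p : ℝ) ^ 2))
    (E : ℕ → Matrix (Fin n) (Fin n) ℝ)
    (hE : ∀ i : ℕ, E i = 1 + ∑ k ∈ Finset.Icc 1 (n - 1), (J ^ (k * i) + (Jᵀ) ^ (k * i)))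
    (gJ : ℝ) (hgJ : gJ = ∑ k ∈ Finset.Icc 1 (n - 1), J2 k) :
    (∀ k : ℕ, 1 ≤ k → ∑ d ∈ k.divisors, J2 d = (k : ℝ) ^ 2) ∧
    (A + gJ • (1 : Matrix (Fin n) (Fin n) ℝ) = ∑ i ∈ Finset.Icc 1 (n - 1), J2 i • E i) ∧
    (∃ (m : ℕ) (U : Matrix (Fin n) (Fin m) ℕ),
      A + gJ • (1 : Matrix (Fin n) (Fin n) ℝ)
        = (U.map (fun x : ℕ => (x : ℝ))) * (U.map (fun x : ℕ => (x : ℝ)))ᵀ) :=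
  stmt_19_general n A hA J hJ J2 hJ2 E hE gJ hgJ
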